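/- (Bethe free energy at a stationary point) Let ((b_i), (b_a)) come from a positive BP fixed point as above. Then F_Bethe((b_i),(b_a)) = −Σ_{a∈F} log Z_a − Σ_{i∈V} log Z_i + Σ_{(i,a)∈E} log Z_{i,a}, where Z_a = Σ_{x_{∂a}∈S_a} f_a(x_{∂a}) ∏_{i∈∂a} m_{i→a}(x_i), Z_i = Σ_x h_i(x) ∏_{a∈∂i} m_{a→i}(x), and Z_{i,a} = Σ_x m_{i→a}(x) m_{a→i}(x). -/

import Mathlib

open Finset

noncomputable section

variable {V F X : Type*} [Fintype V] [Fintype F] [Fintype X]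
  [DecidableEq V] [DecidableEq F] [DecidableEq X]

/-- The factor neighbors of a variable node `i`. -/
def nbrs (N : F → Finset V) (i : V) : Finset F := Finset.univ.filter (fun a => i ∈ N a)

/-- The edge set of the factor graph, as a finset of pairs. -/
def edges (N : F → Finset V) : Finset (V × F) := Finset.univ.filter (fun p => p.1 ∈ N p.2)

/-- `Z_a = ∑_{x_{∂a} ∈ S_a} f_a(x_{∂a}) ∏_{i ∈ ∂a} m_{i→a}(x_i)`
(sum over all assignments; `f_a` vanishes off its support `S_a`). -/
def Za (N : F → Finset V) (f : (a : F) → ({i // i ∈ N a} → X) → ℝ)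
    (mva : V → F → X → ℝ) (a : F) : ℝ :=
  ∑ xa : {i // i ∈ N a} → X, f a xa * ∏ i : {i // i ∈ N a}, mva i.1 a (xa i)

/-- `Z_i = ∑_x h_i(x) ∏_{a ∈ ∂i} m_{a→i}(x)`. -/
def Zi (N : F → Finset V) (h : V → X → ℝ) (mav : V → F → X → ℝ) (i : V) : ℝ :=
  ∑ x : X, h i x * ∏ a ∈ nbrs N i, mav i a x

/-- `Z_{i,a} = ∑_x m_{i→a}(x) m_{a→i}(x)`. -/
def Zia (mva mav : V → F → X → ℝ) (i : V) (a : F) : ℝ :=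
  ∑ x : X, mva i a x * mav i a x

/-- The factor pseudo-marginal `b_a`. -/
def bfa (N : F → Finset V) (f : (a : F) → ({i // i ∈ N a} → X) → ℝ)
    (mva : V → F → X → ℝ) (a : F) (xa : {i // i ∈ N a} → X) : ℝ :=
  f a xa * (∏ i : {i // i ∈ N a}, mva i.1 a (xa i)) / Za N f mva a

/-- The variable pseudo-marginal `b_i`. -/
def bvi (N : F → Finset V) (h : V → X → ℝ) (mav : V → F → X → ℝ) (i : V) (x : X) : ℝ :=
  h i x * (∏ a ∈ nbrs N i, mav i a x) / Zi N h mav i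

/-- The Bethe average energy `U_Bethe`, where the factor sums range over the
support `S_a = {x_{∂a} : f_a(x_{∂a}) ≠ 0}`. -/
def UBethe (N : F → Finset V) (f : (a : F) → ({i // i ∈ N a} → X) → ℝ)
    (h : V → X → ℝ) (mva mav : V → F → X → ℝ) : ℝ :=
  - (∑ a : F, ∑ xa ∈ Finset.univ.filter (fun xa : {i // i ∈ N a} → X => f a xa ≠ 0),
      bfa N f mva a xa * Real.log (f a xa))
  - ∑ i : V, ∑ x : X, bvi N h mav i x * Real.log (h i x)

/-- The Bethe entropy `H_Bethe`. -/
def HBethe (N : F → Finset V) (f : (a : F) → ({i // i ∈ N a} → X) → ℝ)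
    (h : V → X → ℝ) (mva mav : V → F → X → ℝ) : ℝ :=
  - (∑ a : F, ∑ xa ∈ Finset.univ.filter (fun xa : {i // i ∈ N a} → X => f a xa ≠ 0),
      bfa N f mva a xa * Real.log (bfa N f mva a xa))
  + ∑ i : V, ((nbrs N i).card - 1 : ℝ) *
      ∑ x : X, bvi N h mav i x * Real.log (bvi N h mav i x)

/-! Expand `log b_a` and `log b_i` through their product formulas. The BP equation for
`m_{a→i}`, together with `b_i ∝ m_{i→a} m_{a→i}`, makes the `x_i`-marginal of `b_a` equal to
`b_i`, so the factor terms `∑ b_a log m_{i→a}(x_i)` become `∑ b_i log m_{i→a}`; expanding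
`log b_i` once through `Z_i` and once per edge through `Z_{i,a}` then cancels every message
term, leaving only the normalizers. These expansions hold termwise for arbitrary real data: a
term whose pseudo-marginal vanishes is zero, and `(z / z) * log z = log z` for every real `z`. -/

open Real

lemma sum_mul_sub_log_of_sum_eq_div_self {ι : Type*} (s : Finset ι) (b A : ι → ℝ) (z : ℝ)
    (hb : ∑ i ∈ s, b i = z / z) :
    ∑ i ∈ s, b i * (A i - log z) = ∑ i ∈ s, b i * A i - log z := by
  have hz : z / z * log z = log z := by
    rcases eq_or_ne z 0 with rfl | hz
    · simp
    · rw [div_self hz, one_mul]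
  simp only [mul_sub, sum_sub_distrib]
  rw [← sum_mul, hb, hz]

lemma mul_log_mul_div (u v z : ℝ) :
    u * v / z * log (u * v / z) = u * v / z * (log u + log v - log z) := by
  rcases eq_or_ne (u * v / z) 0 with hb | hb
  · rw [hb, zero_mul, zero_mul]
  · obtain ⟨huv, hz⟩ := div_ne_zero_iff.mp hb
    rw [log_div huv hz, log_mul (left_ne_zero_of_mul huv) (right_ne_zero_of_mul huv)]

lemma mul_log_mul_prod_div {ι : Type*} (s : Finset ι) (u z : ℝ) (g : ι → ℝ) :
    u * (∏ i ∈ s, g i) / z * log (u * (∏ i ∈ s, g i) / z)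
      = u * (∏ i ∈ s, g i) / z * (log u + ∑ i ∈ s, log (g i) - log z) := by
  rw [mul_log_mul_div]
  rcases eq_or_ne (∏ i ∈ s, g i) 0 with hp | hp
  · simp [hp]
  · rw [log_prod fun i hi => prod_ne_zero_iff.mp hp i hi]

omit [Fintype V] [DecidableEq F] in
lemma mem_nbrs {N : F → Finset V} {i : V} {a : F} : a ∈ nbrs N i ↔ i ∈ N a := by
  simp [nbrs]

omit [DecidableEq F] in
lemma sum_edges_eq_sum_nbrs (N : F → Finset V) (g : V → F → ℝ) :
    ∑ p ∈ edges N, g p.1 p.2 = ∑ i : V, ∑ a ∈ nbrs N i, g i a := by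
  rw [edges, sum_filter, Fintype.sum_prod_type]
  exact Fintype.sum_congr _ _ fun i => by rw [nbrs, sum_filter]

lemma sum_sum_mem_eq_sum_sum_nbrs (N : F → Finset V) (g : V → F → ℝ) :
    ∑ a : F, ∑ i ∈ N a, g i a = ∑ i : V, ∑ a ∈ nbrs N i, g i a :=
  sum_comm' fun a i => by simp [mem_nbrs]

/-- The BP message `m_{a→i}(x)` up to normalization. -/
def factorUpdate (N : F → Finset V) (f : (a : F) → ({i // i ∈ N a} → X) → ℝ)
    (mva : V → F → X → ℝ) (a : F) (i : {i // i ∈ N a}) (x : X) : ℝ :=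
  ∑ xa ∈ univ.filter (fun xa : {j // j ∈ N a} → X => xa i = x),
    f a xa * ∏ j ∈ univ.erase i, mva j.1 a (xa j)

section Marginals

variable (N : F → Finset V) (f : (a : F) → ({i // i ∈ N a} → X) → ℝ)
  (h : V → X → ℝ) (mva mav : V → F → X → ℝ)

omit [Fintype V] [DecidableEq F] [DecidableEq X] in
lemma sum_bvi (i : V) : ∑ x, bvi N h mav i x = Zi N h mav i / Zi N h mav i := by
  simp only [bvi, ← sum_div]
  rfl

omit [Fintype V] [Fintype F] [DecidableEq F] [DecidableEq X] in
lemma sum_bfa (a : F) : ∑ xa, bfa N f mva a xa = Za N f mva a / Za N f mva a := by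
  simp only [bfa, ← sum_div]
  rfl

omit [Fintype V] [Fintype F] [DecidableEq F] [DecidableEq X] in
lemma sum_support_bfa_mul (a : F) (g : ({i // i ∈ N a} → X) → ℝ) :
    ∑ xa ∈ univ.filter (fun xa => f a xa ≠ 0), bfa N f mva a xa * g xa
      = ∑ xa, bfa N f mva a xa * g xa :=
  sum_filter_of_ne fun xa _ hb hf => hb (by simp [bfa, hf])

lemma sum_bfa_mul_log_bfa_sub_sum_bfa_mul_log (a : F) :
    ∑ xa, bfa N f mva a xa * log (bfa N f mva a xa) - ∑ xa, bfa N f mva a xa * log (f a xa)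
      = ∑ i : {i // i ∈ N a}, ∑ xa, bfa N f mva a xa * log (mva i a (xa i))
        - log (Za N f mva a) := by
  have hterm : ∀ xa, bfa N f mva a xa * log (bfa N f mva a xa)
      - bfa N f mva a xa * log (f a xa)
      = bfa N f mva a xa * (∑ i : {i // i ∈ N a}, log (mva i a (xa i)) - log (Za N f mva a)) := by
    intro xa
    rw [bfa, mul_log_mul_prod_div]
    ring
  rw [← sum_sub_distrib, sum_congr rfl fun xa _ => hterm xa,
    sum_mul_sub_log_of_sum_eq_div_self _ _ _ _ (sum_bfa N f mva a)]
  simp only [mul_sum]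
  rw [sum_comm]

omit [Fintype V] [Fintype F] [DecidableEq F] in
lemma sum_filter_mul_prod_mva (a : F) (i : {i // i ∈ N a}) (x : X) :
    ∑ xa ∈ univ.filter (fun xa : {j // j ∈ N a} → X => xa i = x),
      f a xa * ∏ j, mva j.1 a (xa j) = mva i a x * factorUpdate N f mva a i x := by
  rw [factorUpdate, mul_sum]
  refine sum_congr rfl fun xa hxa => ?_
  rw [← mul_prod_erase univ _ (mem_univ i), (mem_filter.mp hxa).2]
  ring

lemma sum_filter_bfa_eq_bvi (a : F) (i : {i // i ∈ N a}) (c : ℝ) (hc : c ≠ 0)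
    (hmav : ∀ x, mav i a x = c * factorUpdate N f mva a i x)
    (hbvi : ∀ x, bvi N h mav i x = mva i a x * mav i a x / Zia mva mav i a) (x : X) :
    ∑ xa ∈ univ.filter (fun xa : {j // j ∈ N a} → X => xa i = x), bfa N f mva a xa
      = bvi N h mav i x := by
  have hZ : Zia mva mav i a = c * Za N f mva a := by
    rw [Za, ← sum_fiberwise univ (fun xa : {j // j ∈ N a} → X => xa i), Zia, mul_sum]
    refine sum_congr rfl fun y _ => ?_
    rw [sum_filter_mul_prod_mva, hmav]
    ring
  simp only [bfa, ← sum_div]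
  rw [sum_filter_mul_prod_mva, hbvi, hZ, hmav, mul_left_comm _ c, mul_div_mul_left _ _ hc]

lemma sum_bfa_mul_eq_sum_bvi_mul (a : F) (i : {i // i ∈ N a}) (c : ℝ) (hc : c ≠ 0)
    (hmav : ∀ x, mav i a x = c * factorUpdate N f mva a i x)
    (hbvi : ∀ x, bvi N h mav i x = mva i a x * mav i a x / Zia mva mav i a) (g : X → ℝ) :
    ∑ xa, bfa N f mva a xa * g (xa i) = ∑ x, bvi N h mav i x * g x := by
  rw [← sum_fiberwise univ (fun xa : {j // j ∈ N a} → X => xa i)]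
  refine sum_congr rfl fun x _ => ?_
  rw [sum_congr rfl fun xa hxa => by rw [(mem_filter.mp hxa).2], ← sum_mul,
    sum_filter_bfa_eq_bvi N f h mva mav a i c hc hmav hbvi]

lemma sum_bvi_mul_log_bvi (i : V) :
    ∑ x, bvi N h mav i x * log (bvi N h mav i x)
      = ∑ x, bvi N h mav i x * log (h i x)
        + ∑ a ∈ nbrs N i, ∑ x, bvi N h mav i x * log (mav i a x) - log (Zi N h mav i) := by
  have hterm : ∀ x, bvi N h mav i x * log (bvi N h mav i x)
      = bvi N h mav i x * (log (h i x) + ∑ a ∈ nbrs N i, log (mav i a x) - log (Zi N h mav i)) :=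
    fun x => mul_log_mul_prod_div _ _ _ _
  rw [sum_congr rfl fun x _ => hterm x,
    sum_mul_sub_log_of_sum_eq_div_self _ _ _ _ (sum_bvi N h mav i)]
  simp only [mul_add, mul_sum, sum_add_distrib]
  rw [sum_comm]

omit [Fintype V] [DecidableEq F] [DecidableEq X] in
lemma sum_bvi_mul_log_bvi_of_eq_div_Zia (i : V) (a : F)
    (hbvi : ∀ x, bvi N h mav i x = mva i a x * mav i a x / Zia mva mav i a) :
    ∑ x, bvi N h mav i x * log (bvi N h mav i x)
      = ∑ x, bvi N h mav i x * log (mva i a x) + ∑ x, bvi N h mav i x * log (mav i a x)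
        - log (Zia mva mav i a) := by
  have hsum : ∑ x, bvi N h mav i x = Zia mva mav i a / Zia mva mav i a := by
    simp only [hbvi, ← sum_div]
    rfl
  have hterm : ∀ x, bvi N h mav i x * log (bvi N h mav i x)
      = bvi N h mav i x * (log (mva i a x) + log (mav i a x) - log (Zia mva mav i a)) := by
    intro x
    rw [hbvi, mul_log_mul_div]
  rw [sum_congr rfl fun x _ => hterm x, sum_mul_sub_log_of_sum_eq_div_self _ _ _ _ hsum]
  simp only [mul_add, sum_add_distrib]

/-- Counting the entropy of `b_i` once per neighbouring factor, the `m_{a→i}` terms of the two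
expansions of `b_i` cancel. -/
lemma card_sub_one_mul_sum_bvi_mul_log_bvi (i : V)
    (hbvi : ∀ a ∈ nbrs N i, ∀ x, bvi N h mav i x = mva i a x * mav i a x / Zia mva mav i a) :
    ((nbrs N i).card - 1 : ℝ) * ∑ x, bvi N h mav i x * log (bvi N h mav i x)
      = ∑ a ∈ nbrs N i, (∑ x, bvi N h mav i x * log (mva i a x) - log (Zia mva mav i a))
        - ∑ x, bvi N h mav i x * log (h i x) + log (Zi N h mav i) := by
  have hcard : ((nbrs N i).card : ℝ) * ∑ x, bvi N h mav i x * log (bvi N h mav i x)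
      = ∑ a ∈ nbrs N i, ∑ x, bvi N h mav i x * log (bvi N h mav i x) := by
    rw [sum_const, nsmul_eq_mul]
  rw [sub_one_mul, hcard, sum_congr rfl fun a ha =>
      sum_bvi_mul_log_bvi_of_eq_div_Zia N h mva mav i a (hbvi a ha),
    sum_bvi_mul_log_bvi N h mav i]
  simp only [sum_add_distrib, sum_sub_distrib]
  ring

end Marginals

theorem bethe_free_energy_at_stationary_point_general
    (N : F → Finset V)
    (f : (a : F) → ({i // i ∈ N a} → X) → ℝ)
    (h : V → X → ℝ)
    (mva mav : V → F → X → ℝ)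
    (hfix2 : ∀ (i : V) (a : F) (hia : i ∈ N a), ∃ c : ℝ, 0 < c ∧ ∀ x,
      mav i a x = c * ∑ xa ∈ Finset.univ.filter
          (fun xa : {j // j ∈ N a} → X => xa ⟨i, hia⟩ = x),
        f a xa * ∏ j ∈ Finset.univ.erase (⟨i, hia⟩ : {j // j ∈ N a}), mva j.1 a (xa j))
    (hbic : ∀ (i : V) (a : F) (hia : i ∈ N a) (x : X),
      bvi N h mav i x = mva i a x * mav i a x / Zia mva mav i a) :
    UBethe N f h mva mav - HBethe N f h mva mav
      = - (∑ a : F, Real.log (Za N f mva a)) - (∑ i : V, Real.log (Zi N h mav i))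
        + ∑ p ∈ edges N, Real.log (Zia mva mav p.1 p.2) := by
  have factor_terms : ∀ a,
      ∑ xa ∈ univ.filter (fun xa => f a xa ≠ 0), bfa N f mva a xa * log (bfa N f mva a xa)
        - ∑ xa ∈ univ.filter (fun xa => f a xa ≠ 0), bfa N f mva a xa * log (f a xa)
      = ∑ i ∈ N a, ∑ x, bvi N h mav i x * log (mva i a x) - log (Za N f mva a) := by
    intro a
    rw [sum_support_bfa_mul, sum_support_bfa_mul, sum_bfa_mul_log_bfa_sub_sum_bfa_mul_log,
      ← sum_coe_sort (N a)]
    congr 1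
    refine sum_congr rfl fun i _ => ?_
    obtain ⟨c, hc, hmav⟩ := hfix2 i a i.2
    exact sum_bfa_mul_eq_sum_bvi_mul N f h mva mav a i c hc.ne' hmav (hbic i a i.2)
      fun x => log (mva i a x)
  have variable_terms := fun i => card_sub_one_mul_sum_bvi_mul_log_bvi N h mva mav i
    fun a ha => hbic i a (mem_nbrs.mp ha)
  rw [UBethe, HBethe, sum_edges_eq_sum_nbrs N fun i a => log (Zia mva mav i a)]
  have hfactors := sum_congr rfl fun a (_ : a ∈ univ) => factor_terms a
  rw [sum_sub_distrib, sum_sub_distrib, sum_sum_mem_eq_sum_sum_nbrs] at hfactors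
  simp only [variable_terms, sum_add_distrib, sum_sub_distrib]
  linarith

/-- **Bethe free energy at a stationary point.**
At a positive BP fixed point, `F_Bethe = −∑_a log Z_a − ∑_i log Z_i + ∑_{(i,a)∈E} log Z_{i,a}`. -/
theorem bethe_free_energy_at_stationary_point
    (N : F → Finset V)
    (f : (a : F) → ({i // i ∈ N a} → X) → ℝ)
    (h : V → X → ℝ)
    (mva mav : V → F → X → ℝ)
    (hh : ∀ i x, 0 < h i x)
    (hf : ∀ a xa, 0 ≤ f a xa)
    (hslice : ∀ (a : F) (i : {i // i ∈ N a}) (z : X),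
      ∃ xa : {i // i ∈ N a} → X, xa i = z ∧ 0 < f a xa)
    (hm1 : ∀ (i : V) (a : F), i ∈ N a → ∀ x, 0 < mva i a x)
    (hm2 : ∀ (i : V) (a : F), i ∈ N a → ∀ x, 0 < mav i a x)
    (hfix1 : ∀ (i : V) (a : F), i ∈ N a → ∃ c : ℝ, 0 < c ∧ ∀ x,
      mva i a x = c * (h i x * ∏ a' ∈ (nbrs N i).erase a, mav i a' x))
    (hfix2 : ∀ (i : V) (a : F) (hia : i ∈ N a), ∃ c : ℝ, 0 < c ∧ ∀ x,
      mav i a x = c * ∑ xa ∈ Finset.univ.filter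
          (fun xa : {j // j ∈ N a} → X => xa ⟨i, hia⟩ = x),
        f a xa * ∏ j ∈ Finset.univ.erase (⟨i, hia⟩ : {j // j ∈ N a}), mva j.1 a (xa j))
    (hbic : ∀ (i : V) (a : F) (hia : i ∈ N a) (x : X),
      bvi N h mav i x = mva i a x * mav i a x / Zia mva mav i a) :
    UBethe N f h mva mav - HBethe N f h mva mav
      = - (∑ a : F, Real.log (Za N f mva a)) - (∑ i : V, Real.log (Zi N h mav i))
        + ∑ p ∈ edges N, Real.log (Zia mva mav p.1 p.2) :=
  bethe_free_energy_at_stationary_point_general N f h mva mav hfix2 hbic
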